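/- arXiv:1905.06315 — 5 statements merged into one kernel-verified Lean document; each statement's English description precedes it below -/
import Mathlib

section
/- Let κ > 0, T > 0, t ∈ [0,T], τ = T - t, θ > 0, σ² ≥ 0, φ(s) = (1 - e^{-κ(T-s)})/κ, m(s) = θ + (σ² - θ)e^{-κ(s-t)}. Then ν² ∫_t^T m(u) (∫_u^T e^{-κ(z-u)} φ(z) dz) du = (ν²/(2κ³)) { 2[σ² + θ(κτ - 3)] + e^{-κτ}[ θ(κ²τ² + 4κτ + 6) - σ²(κ²τ² + 2κτ + 2) ] }. -/
/-! Since `exp (-κ (z - u)) * exp (-κ (T - z)) = exp (-κ (T - u))`, both the inner and the outer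
integrand are exponential polynomials in the integration variable; each integral is evaluated
by the fundamental theorem of calculus with an explicit primitive. -/

open Real intervalIntegral

theorem exp_neg_mul_sub_mul_exp_neg_mul_sub (κ a b c : ℝ) :
    exp (-κ * (b - a)) * exp (-κ * (c - b)) = exp (-κ * (c - a)) := by
  rw [← exp_add]; ring_nf

theorem hasDerivAt_exp_mul_sub_const (a b x : ℝ) :
    HasDerivAt (fun y => exp (a * (y - b))) (a * exp (a * (x - b))) x := by
  simpa [mul_comm] using (((hasDerivAt_id x).sub_const b).const_mul a).exp

theorem hasDerivAt_exp_mul_const_sub (a b x : ℝ) :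
    HasDerivAt (fun y => exp (a * (b - y))) (-a * exp (a * (b - x))) x := by
  simpa [mul_comm] using (((hasDerivAt_id x).const_sub b).const_mul a).exp

section

variable {κ : ℝ}

theorem integral_exp_neg_mul_sub_mul_one_sub_exp (hκ : κ ≠ 0) (u T : ℝ) :
    ∫ z in u..T, exp (-κ * (z - u)) * ((1 - exp (-κ * (T - z))) / κ) =
      (1 - exp (-κ * (T - u)) - κ * (T - u) * exp (-κ * (T - u))) / κ ^ 2 := by
  have hderiv : ∀ z, HasDerivAt
      (fun z => (-exp (-κ * (z - u)) / κ - z * exp (-κ * (T - u))) / κ)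
      (exp (-κ * (z - u)) * ((1 - exp (-κ * (T - z))) / κ)) z := fun z => by
    refine ((((hasDerivAt_exp_mul_sub_const (-κ) u z).neg.div_const κ).sub
      ((hasDerivAt_id z).mul_const _)).div_const κ).congr_deriv ?_
    rw [← exp_neg_mul_sub_mul_exp_neg_mul_sub κ u z T]
    field_simp
  rw [integral_eq_sub_of_hasDerivAt (fun z _ => hderiv z)
    ((by fun_prop : Continuous _).intervalIntegrable _ _)]
  simp only [sub_self, mul_zero, exp_zero]
  field_simp
  ring

theorem hasDerivAt_primitive_one_sub_exp_sub_mul_exp (hκ : κ ≠ 0) (T u : ℝ) :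
    HasDerivAt
      (fun u => -((T - u) - 2 * (1 - exp (-κ * (T - u))) / κ + (T - u) * exp (-κ * (T - u))) /
        κ ^ 2)
      ((1 - exp (-κ * (T - u)) - κ * (T - u) * exp (-κ * (T - u))) / κ ^ 2) u := by
  have hs := (hasDerivAt_id' u).const_sub T
  have he := hasDerivAt_exp_mul_const_sub (-κ) T u
  refine (((hs.sub (((he.const_sub 1).const_mul 2).div_const κ)).add
    (hs.mul he)).neg.div_const (κ ^ 2)).congr_deriv ?_
  field_simp
  ring

theorem hasDerivAt_primitive_exp_mul_one_sub_exp_sub_mul_exp (hκ : κ ≠ 0) (t T u : ℝ) :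
    HasDerivAt
      (fun u => (-exp (-κ * (u - t)) / κ - exp (-κ * (T - t)) * u +
        κ * exp (-κ * (T - t)) * (T - u) ^ 2 / 2) / κ ^ 2)
      (exp (-κ * (u - t)) *
        ((1 - exp (-κ * (T - u)) - κ * (T - u) * exp (-κ * (T - u))) / κ ^ 2)) u := by
  have hs := (hasDerivAt_id' u).const_sub T
  refine ((((hasDerivAt_exp_mul_sub_const (-κ) t u).neg.div_const κ).sub
    ((hasDerivAt_id' u).const_mul _)).add ((hs.pow 2).const_mul _ |>.div_const 2)
    |>.div_const (κ ^ 2)).congr_deriv ?_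
  rw [← exp_neg_mul_sub_mul_exp_neg_mul_sub κ t u T]
  field_simp
  ring

theorem integral_affine_exp_mul_one_sub_exp_sub_mul_exp (hκ : κ ≠ 0) (t T θ σsq : ℝ) :
    ∫ u in t..T, (θ + (σsq - θ) * exp (-κ * (u - t))) *
        ((1 - exp (-κ * (T - u)) - κ * (T - u) * exp (-κ * (T - u))) / κ ^ 2) =
      (2 * (σsq + θ * (κ * (T - t) - 3)) +
        exp (-κ * (T - t)) *
          (θ * (κ ^ 2 * (T - t) ^ 2 + 4 * κ * (T - t) + 6) -
            σsq * (κ ^ 2 * (T - t) ^ 2 + 2 * κ * (T - t) + 2))) / (2 * κ ^ 3) := by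
  have hderiv : ∀ u, HasDerivAt _
      ((θ + (σsq - θ) * exp (-κ * (u - t))) *
        ((1 - exp (-κ * (T - u)) - κ * (T - u) * exp (-κ * (T - u))) / κ ^ 2)) u := fun u =>
    (((hasDerivAt_primitive_one_sub_exp_sub_mul_exp hκ T u).const_mul θ).add
      ((hasDerivAt_primitive_exp_mul_one_sub_exp_sub_mul_exp hκ t T u).const_mul (σsq - θ))
      ).congr_deriv (by ring)
  rw [integral_eq_sub_of_hasDerivAt (fun u _ => hderiv u)
    ((by fun_prop : Continuous _).intervalIntegrable _ _)]
  simp only [Pi.add_apply, sub_self, mul_zero, exp_zero]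
  field_simp
  ring

end

theorem L_W_LWM_closed_form_general
    (κ T t τ θ σsq ν : ℝ) (hκ : 0 < κ)
    (hτ : τ = T - t)
    (φ : ℝ → ℝ) (hφ : ∀ s, φ s = (1 - Real.exp (-κ * (T - s))) / κ)
    (m : ℝ → ℝ) (hm : ∀ s, m s = θ + (σsq - θ) * Real.exp (-κ * (s - t))) :
    ν ^ 2 * ∫ u in t..T, m u * ∫ z in u..T, Real.exp (-κ * (z - u)) * φ z =
      (ν ^ 2 / (2 * κ ^ 3)) *
        (2 * (σsq + θ * (κ * τ - 3)) +
          Real.exp (-κ * τ) *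
            (θ * (κ ^ 2 * τ ^ 2 + 4 * κ * τ + 6) -
             σsq * (κ ^ 2 * τ ^ 2 + 2 * κ * τ + 2))) := by
  simp only [hφ, hm, integral_exp_neg_mul_sub_mul_one_sub_exp hκ.ne']
  rw [integral_affine_exp_mul_one_sub_exp_sub_mul_exp hκ.ne', hτ]
  ring

theorem L_W_LWM_closed_form
    (κ T t τ θ σsq ν : ℝ) (hκ : 0 < κ) (hT : 0 < T) (ht : t ∈ Set.Icc (0:ℝ) T)
    (hτ : τ = T - t) (hθ : 0 < θ) (hσ : 0 ≤ σsq) (hν : 0 < ν)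
    (φ : ℝ → ℝ) (hφ : ∀ s, φ s = (1 - Real.exp (-κ * (T - s))) / κ)
    (m : ℝ → ℝ) (hm : ∀ s, m s = θ + (σsq - θ) * Real.exp (-κ * (s - t))) :
    ν ^ 2 * ∫ u in t..T, m u * ∫ z in u..T, Real.exp (-κ * (z - u)) * φ z =
      (ν ^ 2 / (2 * κ ^ 3)) *
        (2 * (σsq + θ * (κ * τ - 3)) +
          Real.exp (-κ * τ) *
            (θ * (κ ^ 2 * τ ^ 2 + 4 * κ * τ + 6) -
             σsq * (κ ^ 2 * τ ^ 2 + 2 * κ * τ + 2))) :=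
  L_W_LWM_closed_form_general κ T t τ θ σsq ν hκ hτ φ hφ m hm
end

section
/- Let κ > 0, T > 0, t ∈ [0,T], τ = T - t, θ > 0, σ² ≥ 0, ν > 0, φ(s) = (1 - e^{-κ(T-s)})/κ, m(u) = θ + (σ² - θ)e^{-κ(u-t)}. Then (ν³/8) ∫_t^T m(u) (∫_u^T e^{-κ(z-u)} φ(z)² dz) du = (ν³/(16κ⁴)) { θ[ (2κτ - 7) + 2e^{-κτ}(κ²τ² + 2κτ + 4) - e^{-2κτ} ] - 2σ² e^{-κτ}[ κ²τ² - 2cosh(κτ) + 2 ] }. -/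
/-!
Both integrals are elementary. With `s = T - u`, the inner integral equals `hestonWeight κ s / κ³`,
so after the substitution `u ↦ T - u` the outer integral is a combination of
`∫₀^τ hestonWeight κ` and `∫₀^τ e^{-κ(τ-s)} hestonWeight κ s`. The second one has the
antiderivative `e^{-κτ} (2 cosh(κs)/κ - κ s²)`, which is where the `cosh` in the closed form
comes from.
-/

open Real intervalIntegral

lemma hasDerivAt_exp_const_mul (a x : ℝ) :
    HasDerivAt (fun x => exp (a * x)) (a * exp (a * x)) x := by
  simpa [mul_comm] using ((hasDerivAt_id x).const_mul a).exp

lemma hasDerivAt_exp_mul_sub (a c x : ℝ) :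
    HasDerivAt (fun x => exp (a * (x - c))) (a * exp (a * (x - c))) x := by
  simpa [mul_comm] using (((hasDerivAt_id x).sub_const c).const_mul a).exp

/-- `κ³ ∫_u^T e^{-κ(z-u)} φ(z)² dz` with `φ(z) = (1 - e^{-κ(T-z)})/κ`, as a function of `s = T - u`. -/
noncomputable def hestonWeight (κ s : ℝ) : ℝ :=
  1 - 2 * κ * s * exp (-κ * s) - exp (-2 * κ * s)

@[fun_prop]
lemma continuous_hestonWeight (κ : ℝ) : Continuous (hestonWeight κ) := by
  unfold hestonWeight; fun_prop

lemma integral_exp_mul_sq_one_sub_exp_div {κ : ℝ} (hκ : κ ≠ 0) (u T : ℝ) :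
    ∫ z in u..T, exp (-κ * (z - u)) * ((1 - exp (-κ * (T - z))) / κ) ^ 2 =
      hestonWeight κ (T - u) / κ ^ 3 := by
  have hF : ∀ z ∈ Set.uIcc u T, HasDerivAt
      (fun z => (-exp (-κ * (z - u)) / κ - 2 * z * exp (-κ * (T - u))
        + exp (κ * (z - (2 * T - u))) / κ) / κ ^ 2)
      (exp (-κ * (z - u)) * ((1 - exp (-κ * (T - z))) / κ) ^ 2) z := by
    intro z _
    have h := ((((hasDerivAt_exp_mul_sub (-κ) u z).neg.div_const κ).sub
      ((hasDerivAt_id z).const_mul 2 |>.mul_const (exp (-κ * (T - u))))).add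
      ((hasDerivAt_exp_mul_sub κ (2 * T - u) z).div_const κ)).div_const (κ ^ 2)
    refine h.congr_deriv ?_
    have e1 : exp (-κ * (z - u)) * exp (-κ * (T - z)) = exp (-κ * (T - u)) := by
      rw [← exp_add]; ring_nf
    have e2 : exp (-κ * (T - u)) * exp (-κ * (T - z)) = exp (κ * (z - (2 * T - u))) := by
      rw [← exp_add]; ring_nf
    rw [← e2, ← e1]
    field_simp
    ring
  rw [integral_eq_sub_of_hasDerivAt hF (by apply Continuous.intervalIntegrable; fun_prop)]
  have eT : exp (κ * (T - (2 * T - u))) = exp (-κ * (T - u)) := by ring_nf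
  have eu : exp (κ * (u - (2 * T - u))) = exp (-2 * κ * (T - u)) := by ring_nf
  simp only [hestonWeight, sub_self, mul_zero, exp_zero, eT, eu]
  field_simp
  ring

lemma integral_hestonWeight {κ : ℝ} (hκ : κ ≠ 0) (τ : ℝ) :
    ∫ s in 0..τ, hestonWeight κ s =
      (2 * κ * τ - 5 + 4 * (1 + κ * τ) * exp (-κ * τ) + exp (-2 * κ * τ)) / (2 * κ) := by
  have hF : ∀ s ∈ Set.uIcc 0 τ, HasDerivAt
      (fun s => s + 2 * (s + 1 / κ) * exp (-κ * s) + exp (-2 * κ * s) / (2 * κ))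
      (hestonWeight κ s) s := by
    intro s _
    have h := (((hasDerivAt_id s).add
      ((((hasDerivAt_id s).add_const (1 / κ)).const_mul 2).mul (hasDerivAt_exp_const_mul (-κ) s))).add
      ((hasDerivAt_exp_const_mul (-2 * κ) s).div_const (2 * κ)))
    refine h.congr_deriv ?_
    simp only [hestonWeight, id]
    field_simp
    ring
  rw [integral_eq_sub_of_hasDerivAt hF (by apply Continuous.intervalIntegrable; fun_prop)]
  simp only [mul_zero, exp_zero]
  field_simp
  ring

lemma integral_exp_mul_hestonWeight {κ : ℝ} (hκ : κ ≠ 0) (τ : ℝ) :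
    ∫ s in 0..τ, exp (-κ * (τ - s)) * hestonWeight κ s =
      -exp (-κ * τ) * (κ ^ 2 * τ ^ 2 - 2 * cosh (κ * τ) + 2) / κ := by
  have hF : ∀ s ∈ Set.uIcc 0 τ, HasDerivAt
      (fun s => exp (-κ * τ) * (2 * cosh (κ * s) / κ - κ * s ^ 2))
      (exp (-κ * (τ - s)) * hestonWeight κ s) s := by
    intro s _
    have h := ((((hasDerivAt_id s).const_mul κ).cosh.const_mul 2).div_const κ).sub
      (((hasDerivAt_id s).pow 2).const_mul κ) |>.const_mul (exp (-κ * τ))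
    refine h.congr_deriv ?_
    have e1 : exp (-κ * (τ - s)) = exp (-κ * τ) * exp (κ * s) := by rw [← exp_add]; ring_nf
    have e2 : exp (-2 * κ * s) = exp (-(κ * s)) * exp (-(κ * s)) := by rw [← exp_add]; ring_nf
    have e3 : exp (κ * s) * exp (-(κ * s)) = 1 := by rw [← exp_add]; simp
    simp only [hestonWeight, sinh_eq, id, Nat.cast_ofNat, Nat.reduceSub, pow_one]
    rw [e1, e2]
    field_simp
    linear_combination (2 * κ * s + exp (-(κ * s))) * e3
  rw [integral_eq_sub_of_hasDerivAt hF (by apply Continuous.intervalIntegrable; fun_prop)]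
  simp only [mul_zero, cosh_zero]
  field_simp
  ring

lemma integral_affine_exp_mul_hestonWeight (κ θ c t T : ℝ) :
    ∫ u in t..T, (θ + c * exp (-κ * (u - t))) * (hestonWeight κ (T - u) / κ ^ 3) =
      (θ * (∫ s in 0..T - t, hestonWeight κ s)
        + c * ∫ s in 0..T - t, exp (-κ * (T - t - s)) * hestonWeight κ s) / κ ^ 3 := by
  have hintegrand : ∀ u, (θ + c * exp (-κ * (u - t))) * (hestonWeight κ (T - u) / κ ^ 3) =
      (θ * hestonWeight κ (T - u) + c * (exp (-κ * (T - t - (T - u))) * hestonWeight κ (T - u)))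
        / κ ^ 3 := fun u => by ring_nf
  simp only [hintegrand, integral_div, integral_comp_sub_left
    (fun s => θ * hestonWeight κ s + c * (exp (-κ * (T - t - s)) * hestonWeight κ s)), sub_self]
  rw [integral_add (by apply Continuous.intervalIntegrable; fun_prop)
    (by apply Continuous.intervalIntegrable; fun_prop), integral_const_mul, integral_const_mul]

theorem D_M_DMM_closed_form_general
    (κ T t τ θ σsq ν : ℝ) (hκ : 0 < κ)
    (hτ : τ = T - t)
    (φ : ℝ → ℝ) (hφ : ∀ s, φ s = (1 - Real.exp (-κ * (T - s))) / κ)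
    (m : ℝ → ℝ) (hm : ∀ u, m u = θ + (σsq - θ) * Real.exp (-κ * (u - t))) :
    (ν ^ 3 / 8) * ∫ u in t..T, m u * ∫ z in u..T, Real.exp (-κ * (z - u)) * (φ z) ^ 2 =
      (ν ^ 3 / (16 * κ ^ 4)) *
        (θ * ((2 * κ * τ - 7) +
              2 * Real.exp (-κ * τ) * (κ ^ 2 * τ ^ 2 + 2 * κ * τ + 4) -
              Real.exp (-2 * κ * τ)) -
         2 * σsq * Real.exp (-κ * τ) *
           (κ ^ 2 * τ ^ 2 - 2 * Real.cosh (κ * τ) + 2)) := by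
  have hinner (u : ℝ) :
      ∫ z in u..T, exp (-κ * (z - u)) * φ z ^ 2 = hestonWeight κ (T - u) / κ ^ 3 := by
    simp only [hφ]
    exact integral_exp_mul_sq_one_sub_exp_div hκ.ne' u T
  simp only [hinner, hm]
  rw [integral_affine_exp_mul_hestonWeight, ← hτ, integral_hestonWeight hκ.ne',
    integral_exp_mul_hestonWeight hκ.ne']
  -- stated in the normal form that `field_simp` leaves the goal in
  have hcosh : exp (-(κ * τ)) * cosh (κ * τ) = (1 + exp (-(2 * κ * τ))) / 2 := by
    rw [cosh_eq, mul_div, mul_add, ← exp_add, ← exp_add]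
    ring_nf
    simp
  field_simp
  linear_combination -64 * ν ^ 3 * θ * hcosh

theorem D_M_DMM_closed_form
    (κ T t τ θ σsq ν : ℝ) (hκ : 0 < κ) (hT : 0 < T) (ht : t ∈ Set.Icc (0:ℝ) T)
    (hτ : τ = T - t) (hθ : 0 < θ) (hσ : 0 ≤ σsq) (hν : 0 < ν)
    (φ : ℝ → ℝ) (hφ : ∀ s, φ s = (1 - Real.exp (-κ * (T - s))) / κ)
    (m : ℝ → ℝ) (hm : ∀ u, m u = θ + (σsq - θ) * Real.exp (-κ * (u - t))) :
    (ν ^ 3 / 8) * ∫ u in t..T, m u * ∫ z in u..T, Real.exp (-κ * (z - u)) * (φ z) ^ 2 =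
      (ν ^ 3 / (16 * κ ^ 4)) *
        (θ * ((2 * κ * τ - 7) +
              2 * Real.exp (-κ * τ) * (κ ^ 2 * τ ^ 2 + 2 * κ * τ + 4) -
              Real.exp (-2 * κ * τ)) -
         2 * σsq * Real.exp (-κ * τ) *
           (κ ^ 2 * τ ^ 2 - 2 * Real.cosh (κ * τ) + 2)) :=
  D_M_DMM_closed_form_general κ T t τ θ σsq ν hκ hτ φ hφ m hm
end

section
/- Let κ > 0, T > 0, t ∈ [0,T], τ = T - t, θ > 0, σ² ≥ 0, ν > 0, φ(s) = (1 - e^{-κ(T-s)})/κ, m(u) = θ + (σ² - θ)e^{-κ(u-t)}. Then ν³ ∫_t^T m(u) ( ∫_u^T (∫_s^T e^{-κ(z-s)} φ(z) dz) e^{-κ(s-u)} ds ) du = (ν³ e^{-κτ}/(6κ⁴)) [ θ( 6e^{κτ}(κτ - 4) + κ³τ³ + 6κ²τ² + 18κτ + 24 ) + σ²( 6e^{κτ} - 6 - κ³τ³ - 3κ²τ² - 6κτ ) ]. -/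
/-!
With `x = T - s` the time to maturity, each nested integral applies the Volterra operator
`K f x = ∫ r in 0..x, exp (-κ * (x - r)) * f r` once more, starting from `φ = K 1`; so the middle
integral is `K³ 1 (T - u)`. The functions `Kⁿ 1` have an Erlang-type closed form, characterised by
`(Kⁿ⁺¹ 1)' = Kⁿ 1 - κ Kⁿ⁺¹ 1` and `Kⁿ⁺¹ 1 0 = 0`. Splitting `m = θ + (σ² - θ) e^{-κ(u - t)}`, the
outer integral is `θ ∫₀^τ K³ 1 + (σ² - θ) K⁴ 1 τ`, and the primitive of `K³ 1` follows from the same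
relation.
-/

open Real Finset

section

open scoped Nat

theorem hasDerivAt_sum_range_succ_pow_div_factorial (n : ℕ) (y : ℝ) :
    HasDerivAt (fun y : ℝ => ∑ j ∈ range (n + 1), y ^ j / j !)
      (∑ j ∈ range n, y ^ j / j !) y := by
  induction n with
  | zero => simpa using hasDerivAt_const y (1 : ℝ)
  | succ n ih =>
    simp only [sum_range_succ _ (n + 1)]
    refine (ih.add ((hasDerivAt_pow (n + 1) y).div_const ((n + 1)! : ℝ))).congr_deriv ?_
    rw [sum_range_succ, Nat.factorial_succ]
    push_cast
    field_simp

/-- `iterExpConv κ n = Kⁿ 1`, where `K f x = ∫ r in 0..x, exp (-κ * (x - r)) * f r`;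
equivalently `κ⁻ⁿ` times the distribution function of the Erlang law of shape `n` and rate `κ`. -/
noncomputable def iterExpConv (κ : ℝ) (n : ℕ) (x : ℝ) : ℝ :=
  (1 - exp (-κ * x) * ∑ j ∈ range n, (κ * x) ^ j / j !) / κ ^ n

theorem iterExpConv_succ_zero (κ : ℝ) (n : ℕ) : iterExpConv κ (n + 1) 0 = 0 := by
  simp [iterExpConv, sum_range_succ']

@[fun_prop]
theorem continuous_iterExpConv (κ : ℝ) (n : ℕ) : Continuous (iterExpConv κ n) := by
  unfold iterExpConv; fun_prop

theorem hasDerivAt_iterExpConv {κ : ℝ} (hκ : κ ≠ 0) (n : ℕ) (x : ℝ) :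
    HasDerivAt (iterExpConv κ (n + 1))
      (iterExpConv κ n x - κ * iterExpConv κ (n + 1) x) x := by
  have hexp : HasDerivAt (fun x => exp (-κ * x)) (-κ * exp (-κ * x)) x := by
    simpa [mul_comm] using ((hasDerivAt_id x).const_mul (-κ)).exp
  have hsum : HasDerivAt (fun x => ∑ j ∈ range (n + 1), (κ * x) ^ j / j !)
      ((∑ j ∈ range n, (κ * x) ^ j / j !) * κ) x := by
    simpa [Function.comp_def] using (hasDerivAt_sum_range_succ_pow_div_factorial n (κ * x)).comp x
      ((hasDerivAt_id x).const_mul κ)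
  refine (((hexp.mul hsum).const_sub 1).div_const (κ ^ (n + 1))).congr_deriv ?_
  rw [iterExpConv, iterExpConv, sum_range_succ, pow_succ]
  field_simp
  ring

end

/-- The primitive of `Kⁿ 1` vanishing at `0`, obtained by integrating `κ Kⁿ⁺¹ 1 = Kⁿ 1 - (Kⁿ⁺¹ 1)'`. -/
noncomputable def iterExpConvPrimitive (κ : ℝ) : ℕ → ℝ → ℝ
  | 0, x => x
  | n + 1, x => (iterExpConvPrimitive κ n x - iterExpConv κ (n + 1) x) / κ

theorem iterExpConvPrimitive_zero_right (κ : ℝ) (n : ℕ) : iterExpConvPrimitive κ n 0 = 0 := by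
  induction n with
  | zero => rfl
  | succ n ih => simp [iterExpConvPrimitive, ih, iterExpConv_succ_zero]

theorem hasDerivAt_iterExpConvPrimitive {κ : ℝ} (hκ : κ ≠ 0) (n : ℕ) (x : ℝ) :
    HasDerivAt (iterExpConvPrimitive κ n) (iterExpConv κ n x) x := by
  induction n with
  | zero => exact (hasDerivAt_id' x).congr_deriv (by simp [iterExpConv])
  | succ n ih =>
    refine ((ih.sub (hasDerivAt_iterExpConv hκ n x)).div_const κ).congr_deriv ?_
    field_simp
    ring

theorem integral_exp_mul_comp_sub_eq {a u T : ℝ} {g G : ℝ → ℝ} (hg : Continuous g)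
    (hG : ∀ y, HasDerivAt G (g y - a * G y) y) (hG0 : G 0 = 0) :
    ∫ s in u..T, exp (-a * (s - u)) * g (T - s) = G (T - u) := by
  have hderiv : ∀ s ∈ Set.uIcc u T, HasDerivAt (fun s => -(exp (-a * (s - u)) * G (T - s)))
      (exp (-a * (s - u)) * g (T - s)) s := by
    intro s _
    have hexp : HasDerivAt (fun s => exp (-a * (s - u))) (-a * exp (-a * (s - u))) s := by
      simpa [mul_comm] using (((hasDerivAt_id s).sub_const u).const_mul (-a)).exp
    have hGs := (hG (T - s)).comp s ((hasDerivAt_id s).const_sub T)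
    refine (hexp.mul hGs).neg.congr_deriv ?_
    simp only [Function.comp_apply]
    ring
  rw [intervalIntegral.integral_eq_sub_of_hasDerivAt hderiv
    (by apply Continuous.intervalIntegrable; fun_prop)]
  simp [hG0]

theorem triple_bracket_closed_form_general
    (κ T t τ θ σsq ν : ℝ) (hκ : 0 < κ)
    (hτ : τ = T - t)
    (φ : ℝ → ℝ) (hφ : ∀ s, φ s = (1 - Real.exp (-κ * (T - s))) / κ)
    (m : ℝ → ℝ) (hm : ∀ u, m u = θ + (σsq - θ) * Real.exp (-κ * (u - t))) :
    ν ^ 3 * ∫ u in t..T, m u *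
        ∫ s in u..T, (∫ z in s..T, Real.exp (-κ * (z - s)) * φ z) * Real.exp (-κ * (s - u)) =
      (ν ^ 3 * Real.exp (-κ * τ) / (6 * κ ^ 4)) *
        (θ * (6 * Real.exp (κ * τ) * (κ * τ - 4) +
              κ ^ 3 * τ ^ 3 + 6 * κ ^ 2 * τ ^ 2 + 18 * κ * τ + 24) +
         σsq * (6 * Real.exp (κ * τ) - 6 - κ ^ 3 * τ ^ 3 - 3 * κ ^ 2 * τ ^ 2 - 6 * κ * τ)) := by
  have hκ0 : κ ≠ 0 := hκ.ne'
  have hconv (n : ℕ) (u : ℝ) :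
      ∫ s in u..T, exp (-κ * (s - u)) * iterExpConv κ n (T - s) = iterExpConv κ (n + 1) (T - u) :=
    integral_exp_mul_comp_sub_eq (continuous_iterExpConv κ n) (hasDerivAt_iterExpConv hκ0 n)
      (iterExpConv_succ_zero κ n)
  have hφ' : φ = fun z => iterExpConv κ 1 (T - z) := by
    ext z; simp [hφ, iterExpConv]
  have hmiddle (u : ℝ) :
      ∫ s in u..T, (∫ z in s..T, exp (-κ * (z - s)) * φ z) * exp (-κ * (s - u)) =
        iterExpConv κ 3 (T - u) := by
    simp_rw [hφ', hconv, mul_comm _ (exp _), hconv]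
  have hprimitive : ∫ u in t..T, exp (-0 * (u - t)) * iterExpConv κ 3 (T - u) =
      iterExpConvPrimitive κ 3 (T - t) :=
    integral_exp_mul_comp_sub_eq (continuous_iterExpConv κ 3)
      (by simpa using hasDerivAt_iterExpConvPrimitive hκ0 3) (iterExpConvPrimitive_zero_right κ 3)
  have houter : ∫ u in t..T, m u * iterExpConv κ 3 (T - u) =
      θ * iterExpConvPrimitive κ 3 (T - t) + (σsq - θ) * iterExpConv κ 4 (T - t) := by
    rw [← hprimitive, ← hconv, ← intervalIntegral.integral_const_mul,
      ← intervalIntegral.integral_const_mul, ← intervalIntegral.integral_add]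
    · congr 1; ext u; rw [hm]; simp only [neg_zero, zero_mul, exp_zero, one_mul]; ring
    all_goals exact (by fun_prop : Continuous _).intervalIntegrable _ _
  simp_rw [hmiddle, houter, hτ]
  have hexp : exp (κ * (T - t)) = (exp (-κ * (T - t)))⁻¹ := by rw [← exp_neg, neg_mul, neg_neg]
  simp only [iterExpConvPrimitive, iterExpConv, sum_range_succ, sum_range_zero, Nat.factorial, hexp]
  push_cast
  field_simp
  ring

theorem triple_bracket_closed_form
    (κ T t τ θ σsq ν : ℝ) (hκ : 0 < κ) (hT : 0 < T) (ht : t ∈ Set.Icc (0:ℝ) T)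
    (hτ : τ = T - t) (hθ : 0 < θ) (hσ : 0 ≤ σsq) (hν : 0 < ν)
    (φ : ℝ → ℝ) (hφ : ∀ s, φ s = (1 - Real.exp (-κ * (T - s))) / κ)
    (m : ℝ → ℝ) (hm : ∀ u, m u = θ + (σsq - θ) * Real.exp (-κ * (u - t))) :
    ν ^ 3 * ∫ u in t..T, m u *
        ∫ s in u..T, (∫ z in s..T, Real.exp (-κ * (z - s)) * φ z) * Real.exp (-κ * (s - u)) =
      (ν ^ 3 * Real.exp (-κ * τ) / (6 * κ ^ 4)) *
        (θ * (6 * Real.exp (κ * τ) * (κ * τ - 4) +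
              κ ^ 3 * τ ^ 3 + 6 * κ ^ 2 * τ ^ 2 + 18 * κ * τ + 24) +
         σsq * (6 * Real.exp (κ * τ) - 6 - κ ^ 3 * τ ^ 3 - 3 * κ ^ 2 * τ ^ 2 - 6 * κ * τ)) :=
  triple_bracket_closed_form_general κ T t τ θ σsq ν hκ hτ φ hφ m hm
end

section
/- Let κ > 0, T > 0, t ∈ [0,T], τ = T - t, θ > 0, σ² ≥ 0, ν > 0, φ(s) = (1 - e^{-κ(T-s)})/κ, m(u) = θ + (σ² - θ)e^{-κ(u-t)}. Then (ν⁴/8) ∫_t^T m(u) φ(u) (∫_u^T e^{-κ(z-u)} φ(z)² dz) du = (ν⁴/(48κ⁵)) { θ[ 3e^{-κτ}(2κ²τ² + 6κτ + 5) + 6e^{-2κτ}(κτ + 1) + (6κτ - 22) + e^{-3κτ} ] + 3σ²[ e^{-κτ}(-2κ²τ² - 2κτ + 1) - 2e^{-2κτ}(2κτ + 1) + 2 - e^{-3κτ} ] }. -/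
private lemma exp_split (κ X Y : ℝ) :
    Real.exp (-κ * (X - Y)) = Real.exp (κ * Y) * (Real.exp (κ * X))⁻¹ := by
  rw [← Real.exp_neg, ← Real.exp_add]
  ring_nf

private lemma outer_eq (κ T t θ σsq : ℝ) (hκ : κ ≠ 0) :
    (∫ u in t..T, (θ + (σsq - θ) * Real.exp (-κ * (u - t))) *
        ((1 - Real.exp (-κ * (T - u))) / κ) *
        ((1/κ^2) * (-2 * Real.exp (-κ*(T-u)) * (T-u) + (1 - Real.exp (-κ*(T-u))^2)/κ)))
      = (θ/κ^4) * ((-2) * (Real.exp (κ*T) * (Real.exp (κ*T))⁻¹ * (T - T))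
          + (Real.exp (κ*T) * (Real.exp (κ*T))⁻¹)^2 * (T - T)
          + T
          + (-3/κ) * (Real.exp (κ*T) * (Real.exp (κ*T))⁻¹)
          + (1/(3*κ)) * (Real.exp (κ*T) * (Real.exp (κ*T))⁻¹)^3)
        + ((σsq-θ)/κ^3) * ((Real.exp (κ*t) * (Real.exp (κ*T))⁻¹) * (T - T)^2
          + (2*(Real.exp (κ*t) * (Real.exp (κ*T))⁻¹)/κ) * (Real.exp (κ*T) * (Real.exp (κ*T))⁻¹ * (T - T))
          + ((Real.exp (κ*t) * (Real.exp (κ*T))⁻¹)/κ^2) * (Real.exp (κ*T) * (Real.exp (κ*T))⁻¹)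
          + (-1/κ^2) * (Real.exp (κ*t) * (Real.exp (κ*T))⁻¹)
          + (-((Real.exp (κ*t) * (Real.exp (κ*T))⁻¹)/κ)) * T
          + ((Real.exp (κ*t) * (Real.exp (κ*T))⁻¹)/(2*κ^2)) * (Real.exp (κ*T) * (Real.exp (κ*T))⁻¹)^2)
      - ((θ/κ^4) * ((-2) * (Real.exp (κ*t) * (Real.exp (κ*T))⁻¹ * (T - t))
          + (Real.exp (κ*t) * (Real.exp (κ*T))⁻¹)^2 * (T - t)
          + t
          + (-3/κ) * (Real.exp (κ*t) * (Real.exp (κ*T))⁻¹)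
          + (1/(3*κ)) * (Real.exp (κ*t) * (Real.exp (κ*T))⁻¹)^3)
        + ((σsq-θ)/κ^3) * ((Real.exp (κ*t) * (Real.exp (κ*T))⁻¹) * (T - t)^2
          + (2*(Real.exp (κ*t) * (Real.exp (κ*T))⁻¹)/κ) * (Real.exp (κ*t) * (Real.exp (κ*T))⁻¹ * (T - t))
          + ((Real.exp (κ*t) * (Real.exp (κ*T))⁻¹)/κ^2) * (Real.exp (κ*t) * (Real.exp (κ*T))⁻¹)
          + (-1/κ^2) * (Real.exp (κ*t) * (Real.exp (κ*t))⁻¹)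
          + (-((Real.exp (κ*t) * (Real.exp (κ*T))⁻¹)/κ)) * t
          + ((Real.exp (κ*t) * (Real.exp (κ*T))⁻¹)/(2*κ^2)) * (Real.exp (κ*t) * (Real.exp (κ*T))⁻¹)^2)) := by
  set q : ℝ := Real.exp (κ*t) * (Real.exp (κ*T))⁻¹ with hq
  set F : ℝ → ℝ := fun v =>
      (θ/κ^4) * ((-2) * (Real.exp (κ*v) * (Real.exp (κ*T))⁻¹ * (T - v))
        + (Real.exp (κ*v) * (Real.exp (κ*T))⁻¹)^2 * (T - v)
        + v
        + (-3/κ) * (Real.exp (κ*v) * (Real.exp (κ*T))⁻¹)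
        + (1/(3*κ)) * (Real.exp (κ*v) * (Real.exp (κ*T))⁻¹)^3)
      + ((σsq-θ)/κ^3) * (q * (T - v)^2
        + (2*q/κ) * (Real.exp (κ*v) * (Real.exp (κ*T))⁻¹ * (T - v))
        + (q/κ^2) * (Real.exp (κ*v) * (Real.exp (κ*T))⁻¹)
        + (-1/κ^2) * (Real.exp (κ*t) * (Real.exp (κ*v))⁻¹)
        + (-(q/κ)) * v
        + (q/(2*κ^2)) * (Real.exp (κ*v) * (Real.exp (κ*T))⁻¹)^2)
    with hFdef
  have hder : ∀ u ∈ Set.uIcc t T, HasDerivAt F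
      ((θ + (σsq - θ) * Real.exp (-κ * (u - t))) *
        ((1 - Real.exp (-κ * (T - u))) / κ) *
        ((1/κ^2) * (-2 * Real.exp (-κ*(T-u)) * (T-u) + (1 - Real.exp (-κ*(T-u))^2)/κ))) u := by
    intro u _
    have h0 : HasDerivAt (fun v : ℝ => κ * v) κ u := by
      simpa using (hasDerivAt_id u).const_mul κ
    have hX : HasDerivAt (fun v : ℝ => Real.exp (κ*v)) (Real.exp (κ*u) * κ) u := h0.exp
    have hE : HasDerivAt (fun v : ℝ => Real.exp (κ*v) * (Real.exp (κ*T))⁻¹)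
        (Real.exp (κ*u) * κ * (Real.exp (κ*T))⁻¹) u := hX.mul_const _
    have hXi : HasDerivAt (fun v : ℝ => (Real.exp (κ*v))⁻¹)
        (-(Real.exp (κ*u) * κ) / (Real.exp (κ*u))^2) u := hX.inv (Real.exp_ne_zero _)
    have hD : HasDerivAt (fun v : ℝ => Real.exp (κ*t) * (Real.exp (κ*v))⁻¹)
        (Real.exp (κ*t) * (-(Real.exp (κ*u) * κ) / (Real.exp (κ*u))^2)) u := hXi.const_mul _
    have hTu : HasDerivAt (fun v : ℝ => T - v) (-1) u := by
      simpa using (hasDerivAt_id u).const_sub T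
    have hB : HasDerivAt F (
        (θ/κ^4) * (((-2) * ((Real.exp (κ*u) * κ * (Real.exp (κ*T))⁻¹) * (T - u)
              + (Real.exp (κ*u) * (Real.exp (κ*T))⁻¹) * (-1))
          + ((2 * (Real.exp (κ*u) * (Real.exp (κ*T))⁻¹)^1 * (Real.exp (κ*u) * κ * (Real.exp (κ*T))⁻¹)) * (T - u)
              + (Real.exp (κ*u) * (Real.exp (κ*T))⁻¹)^2 * (-1))
          + 1
          + (-3/κ) * (Real.exp (κ*u) * κ * (Real.exp (κ*T))⁻¹)
          + (1/(3*κ)) * (3 * (Real.exp (κ*u) * (Real.exp (κ*T))⁻¹)^2 * (Real.exp (κ*u) * κ * (Real.exp (κ*T))⁻¹))))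
        + ((σsq-θ)/κ^3) * ((q * (2 * (T - u)^1 * (-1))
          + (2*q/κ) * ((Real.exp (κ*u) * κ * (Real.exp (κ*T))⁻¹) * (T - u)
              + (Real.exp (κ*u) * (Real.exp (κ*T))⁻¹) * (-1))
          + (q/κ^2) * (Real.exp (κ*u) * κ * (Real.exp (κ*T))⁻¹)
          + (-1/κ^2) * (Real.exp (κ*t) * (-(Real.exp (κ*u) * κ) / (Real.exp (κ*u))^2))
          + (-(q/κ)) * 1
          + (q/(2*κ^2)) * (2 * (Real.exp (κ*u) * (Real.exp (κ*T))⁻¹)^1 * (Real.exp (κ*u) * κ * (Real.exp (κ*T))⁻¹))))) u := by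
      refine HasDerivAt.add (HasDerivAt.const_mul _ ?_) (HasDerivAt.const_mul _ ?_)
      · exact (((((hE.mul hTu).const_mul (-2)).add ((hE.pow 2).mul hTu)).add (hasDerivAt_id u)).add
          (hE.const_mul (-3/κ))).add ((hE.pow 3).const_mul (1/(3*κ)))
      · exact (((((((hTu.pow 2).const_mul q).add ((hE.mul hTu).const_mul (2*q/κ))).add
          (hE.const_mul (q/κ^2))).add (hD.const_mul (-1/κ^2))).add
          ((hasDerivAt_id u).const_mul (-(q/κ)))).add ((hE.pow 2).const_mul (q/(2*κ^2))))
    have heq : (θ + (σsq - θ) * Real.exp (-κ * (u - t))) *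
        ((1 - Real.exp (-κ * (T - u))) / κ) *
        ((1/κ^2) * (-2 * Real.exp (-κ*(T-u)) * (T-u) + (1 - Real.exp (-κ*(T-u))^2)/κ)) = (
        (θ/κ^4) * (((-2) * ((Real.exp (κ*u) * κ * (Real.exp (κ*T))⁻¹) * (T - u)
              + (Real.exp (κ*u) * (Real.exp (κ*T))⁻¹) * (-1))
          + ((2 * (Real.exp (κ*u) * (Real.exp (κ*T))⁻¹)^1 * (Real.exp (κ*u) * κ * (Real.exp (κ*T))⁻¹)) * (T - u)
              + (Real.exp (κ*u) * (Real.exp (κ*T))⁻¹)^2 * (-1))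
          + 1
          + (-3/κ) * (Real.exp (κ*u) * κ * (Real.exp (κ*T))⁻¹)
          + (1/(3*κ)) * (3 * (Real.exp (κ*u) * (Real.exp (κ*T))⁻¹)^2 * (Real.exp (κ*u) * κ * (Real.exp (κ*T))⁻¹))))
        + ((σsq-θ)/κ^3) * ((q * (2 * (T - u)^1 * (-1))
          + (2*q/κ) * ((Real.exp (κ*u) * κ * (Real.exp (κ*T))⁻¹) * (T - u)
              + (Real.exp (κ*u) * (Real.exp (κ*T))⁻¹) * (-1))
          + (q/κ^2) * (Real.exp (κ*u) * κ * (Real.exp (κ*T))⁻¹)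
          + (-1/κ^2) * (Real.exp (κ*t) * (-(Real.exp (κ*u) * κ) / (Real.exp (κ*u))^2))
          + (-(q/κ)) * 1
          + (q/(2*κ^2)) * (2 * (Real.exp (κ*u) * (Real.exp (κ*T))⁻¹)^1 * (Real.exp (κ*u) * κ * (Real.exp (κ*T))⁻¹))))) := by
      rw [exp_split, exp_split, hq]
      field_simp
      ring
    rw [heq]; exact hB
  have hint : IntervalIntegrable
      (fun u => (θ + (σsq - θ) * Real.exp (-κ * (u - t))) *
        ((1 - Real.exp (-κ * (T - u))) / κ) *
        ((1/κ^2) * (-2 * Real.exp (-κ*(T-u)) * (T-u) + (1 - Real.exp (-κ*(T-u))^2)/κ)))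
      MeasureTheory.volume t T := by
    apply Continuous.intervalIntegrable; fun_prop
  rw [intervalIntegral.integral_eq_sub_of_hasDerivAt hder hint, hFdef]

private lemma inner_eq (κ T : ℝ) (hκ : κ ≠ 0) (u : ℝ) :
    (∫ z in u..T, Real.exp (-κ * (z - u)) * ((1 - Real.exp (-κ * (T - z))) / κ) ^ 2)
      = (1/κ^2) * (-2 * Real.exp (-κ*(T-u)) * (T-u) + (1 - Real.exp (-κ*(T-u))^2)/κ) := by
  set F : ℝ → ℝ := fun z => Real.exp (κ*u)/κ^2 *
      (-(Real.exp (κ*z))⁻¹/κ - 2*(Real.exp (κ*T))⁻¹*z + ((Real.exp (κ*T))⁻¹)^2 * Real.exp (κ*z)/κ)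
    with hFdef
  have hder : ∀ z ∈ Set.uIcc u T,
      HasDerivAt F (Real.exp (-κ * (z - u)) * ((1 - Real.exp (-κ * (T - z))) / κ) ^ 2) z := by
    intro z _
    have h0 : HasDerivAt (fun v : ℝ => κ * v) κ z := by
      simpa using (hasDerivAt_id z).const_mul κ
    have hX : HasDerivAt (fun v : ℝ => Real.exp (κ*v)) (Real.exp (κ*z) * κ) z := h0.exp
    have hXi : HasDerivAt (fun v : ℝ => (Real.exp (κ*v))⁻¹)
        (-(Real.exp (κ*z) * κ) / (Real.exp (κ*z))^2) z := hX.inv (Real.exp_ne_zero _)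
    have hB : HasDerivAt F (Real.exp (κ*u)/κ^2 *
        (-(-(Real.exp (κ*z) * κ) / (Real.exp (κ*z))^2)/κ - (2*(Real.exp (κ*T))⁻¹) * 1
          + ((Real.exp (κ*T))⁻¹)^2 * (Real.exp (κ*z) * κ)/κ)) z := by
      refine HasDerivAt.const_mul _ ?_
      exact ((hXi.neg.div_const κ).sub ((hasDerivAt_id z).const_mul (2*(Real.exp (κ*T))⁻¹))).add
        ((hX.const_mul (((Real.exp (κ*T))⁻¹)^2)).div_const κ)
    have heq : Real.exp (-κ * (z - u)) * ((1 - Real.exp (-κ * (T - z))) / κ) ^ 2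
        = Real.exp (κ*u)/κ^2 *
        (-(-(Real.exp (κ*z) * κ) / (Real.exp (κ*z))^2)/κ - (2*(Real.exp (κ*T))⁻¹) * 1
          + ((Real.exp (κ*T))⁻¹)^2 * (Real.exp (κ*z) * κ)/κ) := by
      rw [exp_split, exp_split]
      field_simp
      ring
    rw [heq]; exact hB
  have hint : IntervalIntegrable
      (fun z => Real.exp (-κ * (z - u)) * ((1 - Real.exp (-κ * (T - z))) / κ) ^ 2)
      MeasureTheory.volume u T := by
    apply Continuous.intervalIntegrable; fun_prop
  rw [intervalIntegral.integral_eq_sub_of_hasDerivAt hder hint, hFdef]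
  simp only
  rw [exp_split]
  field_simp
  ring

theorem D_M_DMM_zero_corr_closed_form
    (κ T t τ θ σsq ν : ℝ) (hκ : 0 < κ) (hT : 0 < T) (ht : t ∈ Set.Icc (0:ℝ) T)
    (hτ : τ = T - t) (hθ : 0 < θ) (hσ : 0 ≤ σsq) (hν : 0 < ν)
    (φ : ℝ → ℝ) (hφ : ∀ s, φ s = (1 - Real.exp (-κ * (T - s))) / κ)
    (m : ℝ → ℝ) (hm : ∀ u, m u = θ + (σsq - θ) * Real.exp (-κ * (u - t))) :
    (ν ^ 4 / 8) * ∫ u in t..T, m u * φ u *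
        ∫ z in u..T, Real.exp (-κ * (z - u)) * (φ z) ^ 2 =
      (ν ^ 4 / (48 * κ ^ 5)) *
        (θ * (3 * Real.exp (-κ * τ) * (2 * κ ^ 2 * τ ^ 2 + 6 * κ * τ + 5) +
              6 * Real.exp (-2 * κ * τ) * (κ * τ + 1) +
              (6 * κ * τ - 22) + Real.exp (-3 * κ * τ)) +
         3 * σsq * (Real.exp (-κ * τ) * (-2 * κ ^ 2 * τ ^ 2 - 2 * κ * τ + 1) -
              2 * Real.exp (-2 * κ * τ) * (2 * κ * τ + 1) +
              2 - Real.exp (-3 * κ * τ))) := by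
  subst hτ
  have hκ' : κ ≠ 0 := ne_of_gt hκ
  simp only [hm, hφ, inner_eq κ T hκ']
  rw [outer_eq κ T t θ σsq hκ']
  have e1 : Real.exp (-κ * (T - t)) = Real.exp (κ*t) * (Real.exp (κ*T))⁻¹ := exp_split κ T t
  have e2 : Real.exp (-2 * κ * (T - t)) = (Real.exp (κ*t) * (Real.exp (κ*T))⁻¹)^2 := by
    rw [show -2*κ*(T-t) = -κ*(T-t) + -κ*(T-t) by ring, Real.exp_add, exp_split]; ring
  have e3 : Real.exp (-3 * κ * (T - t)) = (Real.exp (κ*t) * (Real.exp (κ*T))⁻¹)^3 := by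
    rw [show -3*κ*(T-t) = -κ*(T-t) + -κ*(T-t) + -κ*(T-t) by ring, Real.exp_add, Real.exp_add,
      exp_split]; ring
  rw [e2, e3, e1]
  field_simp
  ring
end

section
/- Let κ > 0, θ > 0, T > 0, t ∈ [0,T], σ² ≥ 0, φ(s) = (1 - e^{-κ(T-s)})/κ, m(s) = θ + (σ² - θ)e^{-κ(s-t)}, a_u² = ∫_u^T m_u(s) ds where m_u(s) = θ + (m(u) - θ)e^{-κ(s-u)}. Then for every u ∈ [t,T], m(u) ≤ a_u²/φ(u) and a_u ≥ √(θκ/2) φ(u). -/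
/-!
Integrating the mean-reverting forward variance gives
`a_u² = θ (T - u - φ(u)) + m(u) φ(u)`, where `φ(u) = ∫_u^T e^{-κ(s-u)} ds`.
With `x = κ (T - u)` and `y = 1 - e^{-x} = κ φ(u)`, the first bound is `y ≤ x`, and the second,
after discarding `m(u) φ(u) ≥ 0`, is `y + y²/2 ≤ x = -log (1 - y)`: the first two terms of the
series of `-log (1 - y)`, all of whose terms are nonnegative.
-/

open Real

lemma add_sq_div_two_le_neg_log_one_sub {y : ℝ} (h0 : 0 ≤ y) (h1 : y < 1) :
    y + y ^ 2 / 2 ≤ -log (1 - y) := by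
  have hs := hasSum_pow_div_log_of_abs_lt_one (abs_lt.2 ⟨by linarith, h1⟩)
  simpa [Finset.sum_range_succ, one_add_one_eq_two] using
    sum_le_hasSum (Finset.range 2) (fun n _ => by positivity) hs

lemma one_sub_exp_neg_add_sq_div_two_le {x : ℝ} (hx : 0 ≤ x) :
    (1 - exp (-x)) + (1 - exp (-x)) ^ 2 / 2 ≤ x := by
  simpa using add_sq_div_two_le_neg_log_one_sub (y := 1 - exp (-x))
    (by simpa using exp_le_one_iff.2 (neg_nonpos.2 hx)) (by simpa using exp_pos (-x))

lemma add_sub_mul_exp_neg_nonneg {θ v κ s : ℝ} (hθ : 0 ≤ θ) (hv : 0 ≤ v) (hκ : 0 ≤ κ)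
    (hs : 0 ≤ s) : 0 ≤ θ + (v - θ) * exp (-κ * s) := by
  have h1 : exp (-κ * s) ≤ 1 := exp_le_one_iff.2 (by nlinarith)
  have h0 := exp_pos (-κ * s)
  nlinarith

/-- `∫₀^τ e^{-κ s} ds`, so that the paper's `φ(u)` is `decayWeight κ (T - u)`. -/
noncomputable def decayWeight (κ τ : ℝ) : ℝ := (1 - exp (-κ * τ)) / κ

lemma decayWeight_nonneg {κ τ : ℝ} (hκ : 0 ≤ κ) (hτ : 0 ≤ τ) : 0 ≤ decayWeight κ τ :=
  div_nonneg (sub_nonneg.2 (exp_le_one_iff.2 (by nlinarith))) hκ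

lemma decayWeight_le {κ : ℝ} (hκ : 0 < κ) (τ : ℝ) : decayWeight κ τ ≤ τ := by
  rw [decayWeight, div_le_iff₀ hκ, neg_mul]
  linarith [one_sub_le_exp_neg (κ * τ)]

lemma half_mul_decayWeight_sq_le {κ τ : ℝ} (hκ : 0 < κ) (hτ : 0 ≤ τ) :
    κ / 2 * decayWeight κ τ ^ 2 ≤ τ - decayWeight κ τ := by
  have h := one_sub_exp_neg_add_sq_div_two_le (mul_nonneg hκ.le hτ)
  rw [decayWeight, neg_mul]
  field_simp
  linarith

lemma integral_const_add_mul_exp (θ c κ u T : ℝ) (hκ : κ ≠ 0) :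
    ∫ s in u..T, (θ + c * exp (-κ * (s - u))) = θ * (T - u) + c * decayWeight κ (T - u) := by
  have hexp : ∫ s in u..T, exp (-κ * (s - u)) = decayWeight κ (T - u) := by
    have : ∀ s, -κ * (s - u) = -κ * s - (-κ * u) := fun s => by ring
    simp only [this]
    rw [intervalIntegral.integral_comp_mul_sub (f := exp) (neg_ne_zero.2 hκ), integral_exp,
      sub_self, exp_zero, smul_eq_mul, ← this T, decayWeight]
    field_simp
    ring
  have hint : IntervalIntegrable (fun s => c * exp (-κ * (s - u))) MeasureTheory.volume u T :=
    (by fun_prop : Continuous fun s => c * exp (-κ * (s - u))).intervalIntegrable u T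
  rw [intervalIntegral.integral_add intervalIntegrable_const hint,
    intervalIntegral.integral_const_mul, intervalIntegral.integral_const, hexp, smul_eq_mul,
    mul_comm]

theorem intermediate_time_bounds_general
    (κ θ T t σsq : ℝ) (hκ : 0 < κ) (hθ : 0 < θ)
    (hσ : 0 ≤ σsq)
    (φ : ℝ → ℝ) (hφ : ∀ s, φ s = (1 - Real.exp (-κ * (T - s))) / κ)
    (m : ℝ → ℝ) (hm : ∀ s, m s = θ + (σsq - θ) * Real.exp (-κ * (s - t)))
    (asq : ℝ → ℝ)
    (hasq : ∀ u, asq u = ∫ s in u..T, (θ + (m u - θ) * Real.exp (-κ * (s - u)))) :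
    ∀ u ∈ Set.Icc t T,
      m u * φ u ≤ asq u ∧ Real.sqrt (θ * κ / 2) * φ u ≤ Real.sqrt (asq u) := by
  rintro u ⟨htu, huT⟩
  have hφu : φ u = decayWeight κ (T - u) := hφ u
  have hτ : 0 ≤ T - u := sub_nonneg.2 huT
  have hmu : 0 ≤ m u := hm u ▸ add_sub_mul_exp_neg_nonneg hθ.le hσ hκ.le (sub_nonneg.2 htu)
  have hφ_nonneg : 0 ≤ φ u := hφu ▸ decayWeight_nonneg hκ.le hτ
  have hasq_u : asq u = θ * (T - u - φ u) + m u * φ u := by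
    rw [hasq, integral_const_add_mul_exp _ _ _ _ _ hκ.ne', hφu]
    ring
  refine ⟨?_, le_sqrt_of_sq_le ?_⟩
  · rw [hasq_u]
    exact le_add_of_nonneg_left (mul_nonneg hθ.le (sub_nonneg.2 (hφu ▸ decayWeight_le hκ _)))
  · calc (√(θ * κ / 2) * φ u) ^ 2 = θ * (κ / 2 * φ u ^ 2) := by
          rw [mul_pow, sq_sqrt (by positivity)]
          ring
      _ ≤ θ * (T - u - φ u) :=
          mul_le_mul_of_nonneg_left (hφu ▸ half_mul_decayWeight_sq_le hκ hτ) hθ.le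
      _ ≤ asq u := hasq_u ▸ le_add_of_nonneg_right (mul_nonneg hmu hφ_nonneg)

theorem intermediate_time_bounds
    (κ θ T t σsq : ℝ) (hκ : 0 < κ) (hθ : 0 < θ) (hT : 0 < T)
    (ht : t ∈ Set.Icc (0:ℝ) T) (hσ : 0 ≤ σsq)
    (φ : ℝ → ℝ) (hφ : ∀ s, φ s = (1 - Real.exp (-κ * (T - s))) / κ)
    (m : ℝ → ℝ) (hm : ∀ s, m s = θ + (σsq - θ) * Real.exp (-κ * (s - t)))
    (asq : ℝ → ℝ)
    (hasq : ∀ u, asq u = ∫ s in u..T, (θ + (m u - θ) * Real.exp (-κ * (s - u)))) :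
    ∀ u ∈ Set.Icc t T,
      m u * φ u ≤ asq u ∧ Real.sqrt (θ * κ / 2) * φ u ≤ Real.sqrt (asq u) :=
  intermediate_time_bounds_general κ θ T t σsq hκ hθ hσ φ hφ m hm asq hasq
end
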